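/- Let I be a Σ-ideal of P = K[X(Σ)] ⊆ P̄. Then the ord-homogenization I* of I (the largest ord-graded Σ-ideal of P̄ contained in φ⁻¹(I)) satisfies I* = ⟨f* : f ∈ I, f ≠ 0⟩ + N, where for nonzero f ∈ P with topord(f) = max of the orders of the ord-homogeneous components of f, one sets f* = f if f ∈ K and f* = t(σ)·f for any σ ∈ Σ with deg(σ) = topord(f) otherwise. -/

import Mathlib

/- Common setup: the monoid Σ = ⟨σ₁,…,σ_r⟩ ≅ (ℕ^r,+) is modelled additively as
`Fin r → ℕ`; the algebra of partial difference polynomials `P = K[X(Σ)]` is the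
polynomial ring `MvPolynomial (X × (Fin r → ℕ)) K`, and its monomials are elements
of `(X × (Fin r → ℕ)) →₀ ℕ`. -/

noncomputable section

/-- The total degree `deg : Σ → ℕ` of an element of the monoid `Σ ≅ ℕ^r`. -/
def degS {r : ℕ} (σ : Fin r → ℕ) : ℕ := ∑ i, σ i

/-- The shift action of `σ ∈ Σ` on monomials: `σ · ∏ xᵢ(τᵢ)^{aᵢ} = ∏ xᵢ(στᵢ)^{aᵢ}`. -/
def shiftMon {V : Type*} {r : ℕ} (σ : Fin r → ℕ) (m : (V × (Fin r → ℕ)) →₀ ℕ) :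
    (V × (Fin r → ℕ)) →₀ ℕ :=
  Finsupp.mapDomain (fun p => (p.1, σ + p.2)) m

/-- The shift action of `σ ∈ Σ` on `P` by `K`-algebra endomorphisms,
determined by `σ · x(τ) = x(στ)`. -/
def shiftPoly (K : Type*) [CommSemiring K] {V : Type*} {r : ℕ} (σ : Fin r → ℕ) :
    MvPolynomial (V × (Fin r → ℕ)) K →ₐ[K] MvPolynomial (V × (Fin r → ℕ)) K :=
  MvPolynomial.rename (fun p => (p.1, σ + p.2))

/-- The orbit set `Σ · G` of a set of polynomials `G`. -/
def shiftSet (K : Type*) [CommSemiring K] {V : Type*} {r : ℕ}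
    (G : Set (MvPolynomial (V × (Fin r → ℕ)) K)) :
    Set (MvPolynomial (V × (Fin r → ℕ)) K) :=
  {p | ∃ (σ : Fin r → ℕ) (g : MvPolynomial (V × (Fin r → ℕ)) K), g ∈ G ∧ p = shiftPoly K σ g}

/-- The least common multiple of two monomials (pointwise maximum of exponents). -/
def lcmMon {V : Type*} {r : ℕ} (m n : (V × (Fin r → ℕ)) →₀ ℕ) : (V × (Fin r → ℕ)) →₀ ℕ :=
  Finsupp.zipWith max (max_self 0) m n

/-- The greatest common divisor of two monomials (pointwise minimum of exponents). -/
def gcdMon {V : Type*} {r : ℕ} (m n : (V × (Fin r → ℕ)) →₀ ℕ) : (V × (Fin r → ℕ)) →₀ ℕ :=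
  Finsupp.zipWith min (min_self 0) m n

/-- The strict relation of a linear order given as a term. -/
def oLT {α : Type*} (lo : LinearOrder α) (a b : α) : Prop := lo.lt a b

/-- The non-strict relation of a linear order given as a term. -/
def oLE {α : Type*} (lo : LinearOrder α) (a b : α) : Prop := lo.le a b

/-- `lo` is a *monomial ordering* of an additive (monomial) monoid: a linear order
which is a well-order, has the monomial `1` (written additively: `0`) as least
element, and is compatible with multiplication (written additively). -/
structure IsMonOrd {α : Type*} [AddCommMonoid α] (lo : LinearOrder α) : Prop where
  wf : WellFounded (oLT lo)
  zero_le : ∀ a : α, oLE lo 0 a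
  add_lt : ∀ a b c : α, oLT lo a b → oLT lo (c + a) (c + b)

/-- The leading monomial of a polynomial with respect to a monomial ordering
(junk value `1`, i.e. `0`, on the zero polynomial). -/
def lmo {K V : Type*} [CommSemiring K] {r : ℕ} (lo : LinearOrder ((V × (Fin r → ℕ)) →₀ ℕ))
    (f : MvPolynomial (V × (Fin r → ℕ)) K) : (V × (Fin r → ℕ)) →₀ ℕ :=
  haveI : Decidable (f = 0) := Classical.dec _
  if h : f = 0 then 0
  else @Finset.max' _ lo f.support
    (Finset.nonempty_iff_ne_empty.2 fun he => h (MvPolynomial.support_eq_empty.mp he))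

/-- The leading coefficient of a polynomial. -/
def lco {K V : Type*} [CommSemiring K] {r : ℕ} (lo : LinearOrder ((V × (Fin r → ℕ)) →₀ ℕ))
    (f : MvPolynomial (V × (Fin r → ℕ)) K) : K :=
  MvPolynomial.coeff (lmo lo f) f

/-- The S-polynomial `spoly(f,g) = (l/lt(f))·f − (l/lt(g))·g`, where
`l = lcm(lm f, lm g)`. -/
def spoly {K V : Type*} [Field K] {r : ℕ} (lo : LinearOrder ((V × (Fin r → ℕ)) →₀ ℕ))
    (f g : MvPolynomial (V × (Fin r → ℕ)) K) : MvPolynomial (V × (Fin r → ℕ)) K :=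
  MvPolynomial.monomial (lcmMon (lmo lo f) (lmo lo g) - lmo lo f) (lco lo f)⁻¹ * f -
  MvPolynomial.monomial (lcmMon (lmo lo f) (lmo lo g) - lmo lo g) (lco lo g)⁻¹ * g

/-- `f` has a Gröbner representation `f = ∑ qᵢ gᵢ` with respect to `G`:
`gᵢ ∈ G` and `lm(f) ⪰ lm(qᵢ)·lm(gᵢ)` for all (nontrivial) `i`. -/
def HasGroebnerRep {K V : Type*} [Field K] {r : ℕ}
    (lo : LinearOrder ((V × (Fin r → ℕ)) →₀ ℕ))
    (G : Set (MvPolynomial (V × (Fin r → ℕ)) K))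
    (f : MvPolynomial (V × (Fin r → ℕ)) K) : Prop :=
  ∃ (n : ℕ) (q g : Fin n → MvPolynomial (V × (Fin r → ℕ)) K),
    (∀ i, g i ∈ G) ∧ f = ∑ i, q i * g i ∧
    ∀ i, q i ≠ 0 → g i ≠ 0 → oLE lo (lmo lo (q i) + lmo lo (g i)) (lmo lo f)

/-- The ideal `LM(S)` generated by the leading monomials of the nonzero elements
of `S`. -/
def lmIdeal {K V : Type*} [Field K] {r : ℕ} (lo : LinearOrder ((V × (Fin r → ℕ)) →₀ ℕ))
    (S : Set (MvPolynomial (V × (Fin r → ℕ)) K)) : Ideal (MvPolynomial (V × (Fin r → ℕ)) K) :=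
  Ideal.span ((fun g => (MvPolynomial.monomial (lmo lo g) (1 : K))) '' {g | g ∈ S ∧ g ≠ 0})

/-- `G ⊆ I` is a Gröbner basis of `I`: `LM(I)` is generated by `lm(G)`. -/
def IsGBasis {K V : Type*} [Field K] {r : ℕ} (lo : LinearOrder ((V × (Fin r → ℕ)) →₀ ℕ))
    (G : Set (MvPolynomial (V × (Fin r → ℕ)) K))
    (I : Ideal (MvPolynomial (V × (Fin r → ℕ)) K)) : Prop :=
  G ⊆ ↑I ∧ lmIdeal lo (I : Set (MvPolynomial (V × (Fin r → ℕ)) K)) = lmIdeal lo G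

/-- `G ⊆ I` is a Gröbner Σ-basis of `I`: `LM(I)` is generated by `Σ·lm(G)`. -/
def IsSigmaGBasis {K V : Type*} [Field K] {r : ℕ} (lo : LinearOrder ((V × (Fin r → ℕ)) →₀ ℕ))
    (G : Set (MvPolynomial (V × (Fin r → ℕ)) K))
    (I : Ideal (MvPolynomial (V × (Fin r → ℕ)) K)) : Prop :=
  G ⊆ ↑I ∧
  lmIdeal lo (I : Set (MvPolynomial (V × (Fin r → ℕ)) K)) =
    Ideal.span {p | ∃ (σ : Fin r → ℕ) (g : MvPolynomial (V × (Fin r → ℕ)) K),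
      g ∈ G ∧ g ≠ 0 ∧ p = MvPolynomial.monomial (shiftMon σ (lmo lo g)) (1 : K)}

/-- `I` is a Σ-ideal: it is invariant under all the shift endomorphisms. -/
def IsSigmaIdeal {K V : Type*} [CommSemiring K] {r : ℕ}
    (I : Ideal (MvPolynomial (V × (Fin r → ℕ)) K)) : Prop :=
  ∀ (σ : Fin r → ℕ) (p : MvPolynomial (V × (Fin r → ℕ)) K), p ∈ I → shiftPoly K σ p ∈ I

/-- The weight function `w : M → Σ̂ = Σ ∪ {0}` (here `Σ̂` is `WithBot (Fin r → ℕ)`,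
with `⊥` the extra element "0"):  `w(m)` is the `<`-maximum of the weights of the
variables occurring in `m`, where `<` is the given monomial ordering `loS` of `Σ`. -/
def wfun {V : Type*} {r : ℕ} (loS : LinearOrder (Fin r → ℕ))
    (m : (V × (Fin r → ℕ)) →₀ ℕ) : WithBot (Fin r → ℕ) :=
  @Finset.max _ loS (m.support.image (fun p => p.2))

/-- Addition in the idempotent semiring `Σ̂`: the maximum with respect to the
monomial ordering `loS` of `Σ`, with `⊥` as neutral element. -/
def hatAdd {r : ℕ} (loS : LinearOrder (Fin r → ℕ)) (a b : WithBot (Fin r → ℕ)) :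
    WithBot (Fin r → ℕ) :=
  @Max.max _ (@WithBot.linearOrder _ loS).toMax a b

/-- The order `≤` on `Σ̂` induced by the monomial ordering `loS` of `Σ`. -/
def hatLe {r : ℕ} (loS : LinearOrder (Fin r → ℕ)) (a b : WithBot (Fin r → ℕ)) : Prop :=
  @LE.le _ (@WithBot.linearOrder _ loS).toLE a b

/-- The strict order `<` on `Σ̂` induced by the monomial ordering `loS` of `Σ`. -/
def hatLt {r : ℕ} (loS : LinearOrder (Fin r → ℕ)) (a b : WithBot (Fin r → ℕ)) : Prop :=
  @LT.lt _ (@WithBot.linearOrder _ loS).toLT a b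

/-- The order function `ord : M → ℕ ∪ {−∞}`:  the maximum of `deg σ` over the
variables `x(σ)` occurring in `m` (and `−∞ = ⊥` for `m = 1`). -/
def ordFun {V : Type*} {r : ℕ} (m : (V × (Fin r → ℕ)) →₀ ℕ) : WithBot ℕ :=
  (m.support.image (fun p => degS p.2)).max

/-- A polynomial is `w`-homogeneous if all its monomials have the same weight. -/
def IsWHomog {K V : Type*} [CommSemiring K] {r : ℕ} (loS : LinearOrder (Fin r → ℕ))
    (f : MvPolynomial (V × (Fin r → ℕ)) K) : Prop :=
  ∀ m ∈ f.support, ∀ n ∈ f.support, wfun loS m = wfun loS n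

/-- A polynomial is `ord`-homogeneous if all its monomials have the same order. -/
def IsOrdHomog {K V : Type*} [CommSemiring K] {r : ℕ}
    (f : MvPolynomial (V × (Fin r → ℕ)) K) : Prop :=
  ∀ m ∈ f.support, ∀ n ∈ f.support, ordFun m = ordFun n

/-- The block `m(δ) ∈ M(δ) ≅ Mon(K[X])` of a monomial `m`, collecting the variables
of weight exactly `δ`. -/
def blockAt {X : Type*} {r : ℕ} (δ : Fin r → ℕ) (m : (X × (Fin r → ℕ)) →₀ ℕ) : X →₀ ℕ :=
  Finsupp.comapDomain (fun x => (x, δ)) m (fun _ _ _ _ h => congrArg Prod.fst h)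

/-- The weight Σ-ordering `≺_w` determined by a monomial ordering `ltS` of `Σ` and a
monomial ordering `lt1` of `P(1) = K[X(1)]` (transported to every block `P(δ)` via the
isomorphism `ρ(δ)`): compare the blocks of highest weight where the monomials differ. -/
def wlt {X : Type*} {r : ℕ} (ltS : (Fin r → ℕ) → (Fin r → ℕ) → Prop)
    (lt1 : (X →₀ ℕ) → (X →₀ ℕ) → Prop)
    (m n : (X × (Fin r → ℕ)) →₀ ℕ) : Prop :=
  ∃ δ : Fin r → ℕ, lt1 (blockAt δ m) (blockAt δ n) ∧
    ∀ ε : Fin r → ℕ, ltS δ ε → blockAt ε m = blockAt ε n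

/-- The block `m(x_j) ∈ M(x_j) ≅ Mon(K[x₀(Σ)])` of a monomial `m` (here `X = ℕ`),
collecting the variables of index exactly `j`. -/
def blockIdx {r : ℕ} (j : ℕ) (m : (ℕ × (Fin r → ℕ)) →₀ ℕ) : (Fin r → ℕ) →₀ ℕ :=
  Finsupp.comapDomain (fun σ => (j, σ)) m (fun _ _ _ _ h => congrArg Prod.snd h)

/-- The shift action of `σ ∈ Σ` on the monomials of `P(x₀) = K[x₀(Σ)]`. -/
def shiftMon0 {r : ℕ} (σ : Fin r → ℕ) (m : (Fin r → ℕ) →₀ ℕ) : (Fin r → ℕ) →₀ ℕ :=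
  Finsupp.mapDomain (fun τ => σ + τ) m

/-- The index Σ-ordering `≺_i` determined by a monomial Σ-ordering `lt0` of
`P(x₀) = K[x₀(Σ)]` (transported to every `P(x_j)` by the index shift): compare the
blocks of highest index where the monomials differ. -/
def ilt {r : ℕ} (lt0 : ((Fin r → ℕ) →₀ ℕ) → ((Fin r → ℕ) →₀ ℕ) → Prop)
    (m n : (ℕ × (Fin r → ℕ)) →₀ ℕ) : Prop :=
  ∃ j : ℕ, lt0 (blockIdx j m) (blockIdx j n) ∧ ∀ k : ℕ, j < k → blockIdx k m = blockIdx k n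

/- Homogenization setup:  `X̄ = X ∪ {t}` is modelled as `Option X`, with `none`
playing the role of the homogenizing variable `t` and `some x` that of `x ∈ X`;
thus `P̄ = K[X̄(Σ)] = MvPolynomial (Option X × (Fin r → ℕ)) K ⊇ P`. -/

/-- The inclusion `P = K[X(Σ)] ⊆ P̄ = K[X̄(Σ)]`. -/
def embP (K : Type*) [CommSemiring K] {X : Type*} {r : ℕ} :
    MvPolynomial (X × (Fin r → ℕ)) K →ₐ[K] MvPolynomial (Option X × (Fin r → ℕ)) K :=
  MvPolynomial.rename (fun p => (some p.1, p.2))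

/-- The inclusion `Mon(P) ⊆ Mon(P̄)` on monomials. -/
def embMon {X : Type*} {r : ℕ} (m : (X × (Fin r → ℕ)) →₀ ℕ) :
    (Option X × (Fin r → ℕ)) →₀ ℕ :=
  Finsupp.mapDomain (fun p => (some p.1, p.2)) m

/-- The dehomogenization Σ-endomorphism `φ : P̄ → P̄` with `x(σ) ↦ x(σ)`,
`t(σ) ↦ 1`. -/
def phiBar (K : Type*) [CommSemiring K] {X : Type*} {r : ℕ} :
    MvPolynomial (Option X × (Fin r → ℕ)) K →ₐ[K]
      MvPolynomial (Option X × (Fin r → ℕ)) K :=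
  MvPolynomial.aeval (fun p => p.1.elim 1 (fun x => MvPolynomial.X (some x, p.2)))

/-- The dehomogenization map `P̄ → P` with `x(σ) ↦ x(σ)`, `t(σ) ↦ 1`. -/
def dehom (K : Type*) [CommSemiring K] {X : Type*} {r : ℕ} :
    MvPolynomial (Option X × (Fin r → ℕ)) K →ₐ[K] MvPolynomial (X × (Fin r → ℕ)) K :=
  MvPolynomial.aeval (fun p => p.1.elim 1 (fun x => MvPolynomial.X (x, p.2)))

/-- `N`, the largest `ord`-graded Σ-ideal of `P̄` contained in `ker φ`: the ideal
generated by all `ord`-homogeneous elements of `ker φ`. -/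
def Nideal (K : Type*) [CommSemiring K] (X : Type*) (r : ℕ) :
    Ideal (MvPolynomial (Option X × (Fin r → ℕ)) K) :=
  Ideal.span {f | IsOrdHomog f ∧ phiBar K f = 0}

/-- The top order of a polynomial: the maximum of the orders of its monomials. -/
def topord {K V : Type*} [CommSemiring K] {r : ℕ}
    (f : MvPolynomial (V × (Fin r → ℕ)) K) : WithBot ℕ :=
  f.support.sup (fun m => ordFun m)

/-- The `ord`-homogenization `I*` of an ideal `I ⊆ P`: the ideal of `P̄` generated by
all `ord`-homogeneous elements of `φ⁻¹(I)`. -/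
def Istar {K : Type*} [Field K] {X : Type*} {r : ℕ}
    (I : Ideal (MvPolynomial (X × (Fin r → ℕ)) K)) :
    Ideal (MvPolynomial (Option X × (Fin r → ℕ)) K) :=
  Ideal.span {f | IsOrdHomog f ∧ dehom K f ∈ I}

/-- A monomial of `P̄` is `t`-free when it lies in `M = Mon(P)`. -/
def TFree {X : Type*} {r : ℕ} (m : (Option X × (Fin r → ℕ)) →₀ ℕ) : Prop :=
  ∀ p ∈ m.support, p.1 ≠ (none : Option X)

/-- A monomial of `P̄` is normal modulo `N` if it is of the form `m ∈ M`, or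
`t(σ)·n` with `n ∈ M`, `deg σ > ord n` and `t(σ)` the `≺`-least variable `t(τ)`
with `deg τ = deg σ`. -/
def NormalMon {X : Type*} {r : ℕ} (lo : LinearOrder ((Option X × (Fin r → ℕ)) →₀ ℕ))
    (m : (Option X × (Fin r → ℕ)) →₀ ℕ) : Prop :=
  TFree m ∨ ∃ (σ : Fin r → ℕ) (n : (Option X × (Fin r → ℕ)) →₀ ℕ),
    TFree n ∧ ordFun n < (degS σ : WithBot ℕ) ∧
    m = Finsupp.single ((none : Option X), σ) 1 + n ∧
    ∀ τ : Fin r → ℕ, degS τ = degS σ →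
      oLE lo (Finsupp.single ((none : Option X), σ) 1)
        (Finsupp.single ((none : Option X), τ) 1)

/-- `lo` is an `ord`-homogenization Σ-ordering of `P̄`: it is compatible with the
order function, and `t(σ)·m ≺ n` whenever `m, n ∈ M` and `deg σ = ord n > ord m`. -/
def IsHomogOrd {X : Type*} {r : ℕ}
    (lo : LinearOrder ((Option X × (Fin r → ℕ)) →₀ ℕ)) : Prop :=
  (∀ m n : (Option X × (Fin r → ℕ)) →₀ ℕ, ordFun m < ordFun n → oLT lo m n) ∧
  ∀ (m n : (Option X × (Fin r → ℕ)) →₀ ℕ) (σ : Fin r → ℕ),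
    TFree m → TFree n → (degS σ : WithBot ℕ) = ordFun n → ordFun m < ordFun n →
    oLT lo (Finsupp.single ((none : Option X), σ) 1 + m) n

end


/-! Both sides are generated by `ord`-homogeneous elements of `φ⁻¹(I)`, so only `⊆` needs work.
Let `g` be `ord`-homogeneous of order `d` with `f = φ(g) ∈ I` nonzero. Turning every variable
`x(σ)` of a monomial of `g` into `t(σ)` gives a monomial `u` of order `d` with `φ(u) = 1`, and
since `topord f ≤ d`, the product `u·f*` is `ord`-homogeneous of order `d` with `φ(u·f*) = f`.
Hence `g - u·f*` is an `ord`-homogeneous element of `ker φ`, that is, a generator of `N`. -/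

open MvPolynomial

section OrderFunction

variable {V : Type*} {r : ℕ}

lemma ordFun_add (m n : (V × (Fin r → ℕ)) →₀ ℕ) :
    ordFun (m + n) = max (ordFun m) (ordFun n) := by
  classical
  rw [ordFun, Finsupp.support_add_eq_union, Finset.image_union, Finset.max_union]
  rfl

lemma ordFun_single (p : V × (Fin r → ℕ)) :
    ordFun (Finsupp.single p 1) = (degS p.2 : WithBot ℕ) := by
  classical
  rw [ordFun, Finsupp.support_single _ one_ne_zero, Finset.image_singleton,
    Finset.max_singleton]
  rfl

lemma ordFun_mapDomain {W : Type*} (f : V × (Fin r → ℕ) → W × (Fin r → ℕ))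
    (hf : ∀ p, (f p).2 = p.2) (m : (V × (Fin r → ℕ)) →₀ ℕ) :
    ordFun (m.mapDomain f) = ordFun m := by
  classical
  rw [ordFun, Finsupp.mapDomain_support_of_subsingletonAddUnits, Finset.image_image]
  simp only [Function.comp_def, hf]
  rfl

variable {K : Type*} [CommSemiring K]

lemma topord_eq_max_vars (g : MvPolynomial (V × (Fin r → ℕ)) K) :
    topord g = (g.vars.image fun p => degS p.2).max := by
  classical
  refine le_antisymm (Finset.sup_le fun m hm => Finset.max_mono ?_) (Finset.max_le ?_)
  · exact Finset.image_subset_image fun p hp => (mem_vars_iff_mem_support p).2 ⟨m, hm, hp⟩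
  · simp only [Finset.mem_image, forall_exists_index, and_imp, forall_apply_eq_imp_iff₂]
    intro p hp
    obtain ⟨m, hm, hpm⟩ := (mem_vars_iff_mem_support p).1 hp
    exact (Finset.le_max (Finset.mem_image_of_mem _ hpm)).trans (Finset.le_sup (f := ordFun) hm)

lemma topord_le_iff_forall_mem_vars {g : MvPolynomial (V × (Fin r → ℕ)) K} {d : WithBot ℕ} :
    topord g ≤ d ↔ ∀ p ∈ g.vars, (degS p.2 : WithBot ℕ) ≤ d := by
  rw [topord_eq_max_vars, Finset.max_le_iff, Finset.forall_mem_image]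
  rfl

lemma isOrdHomog_of_forall_ordFun_eq {g : MvPolynomial (V × (Fin r → ℕ)) K} {d : WithBot ℕ}
    (h : ∀ m ∈ g.support, ordFun m = d) : IsOrdHomog g :=
  fun m hm n hn => (h m hm).trans (h n hn).symm

lemma support_monomial_one_mul {σ : Type*} (u : σ →₀ ℕ) (h : MvPolynomial σ K) :
    (monomial u 1 * h).support = h.support.map (addLeftEmbedding u) :=
  AddMonoidAlgebra.support_coeff_single_mul h _ (by simp) _

lemma ordFun_eq_of_mem_support_monomial_mul {u m : (V × (Fin r → ℕ)) →₀ ℕ}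
    {h : MvPolynomial (V × (Fin r → ℕ)) K} (hh : topord h ≤ ordFun u)
    (hm : m ∈ (monomial u 1 * h).support) : ordFun m = ordFun u := by
  rw [support_monomial_one_mul] at hm
  obtain ⟨n, hn, rfl⟩ := Finset.mem_map.1 hm
  rw [addLeftEmbedding_apply, ordFun_add]
  exact max_eq_left ((Finset.le_sup (f := ordFun) hn).trans hh)

end OrderFunction

section Dehomogenization

variable {K : Type*} [CommSemiring K] {X : Type*} {r : ℕ}

lemma embP_injective : Function.Injective (embP K (X := X) (r := r)) :=
  rename_injective _ fun a b h => by simpa [Prod.ext_iff] using h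

lemma dehom_comp_embP :
    (dehom K).comp (embP K) = AlgHom.id K (MvPolynomial (X × (Fin r → ℕ)) K) :=
  algHom_ext fun _ => by simp [dehom, embP]

lemma phiBar_eq_embP_comp_dehom : phiBar K = (embP K).comp (dehom K (X := X) (r := r)) :=
  algHom_ext fun ⟨v, _⟩ => by cases v <;> simp [phiBar, dehom, embP]

lemma dehom_X_none (σ : Fin r → ℕ) : dehom K (MvPolynomial.X ((none : Option X), σ)) = 1 := by
  simp [dehom]

lemma topord_embP (f : MvPolynomial (X × (Fin r → ℕ)) K) : topord (embP K f) = topord f := by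
  classical
  rw [topord, embP, support_rename_of_injective, Finset.sup_image]
  · exact Finset.sup_congr rfl fun m _ =>
      ordFun_mapDomain (fun p => ((some p.1 : Option X), p.2)) (fun _ => rfl) m
  · exact fun a b h => by simpa [Prod.ext_iff] using h

lemma topord_dehom_le (g : MvPolynomial (Option X × (Fin r → ℕ)) K) :
    topord (dehom K g) ≤ topord g := by
  rw [topord_le_iff_forall_mem_vars]
  intro p hp
  rw [dehom, aeval_eq_bind₁] at hp
  obtain ⟨⟨v, σ⟩, hv, hpv⟩ := mem_vars_bind₁ _ g hp
  cases v with
  | none => simp at hpv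
  | some x =>
    obtain ⟨d, hd, hpd⟩ := (mem_vars_iff_mem_support p).1 hpv
    obtain rfl : d = Finsupp.single (x, σ) 1 := Finset.mem_singleton.1 (support_monomial_subset hd)
    obtain rfl : p = (x, σ) := Finset.mem_singleton.1 (Finsupp.support_single_subset hpd)
    exact topord_le_iff_forall_mem_vars.1 le_rfl _ hv

noncomputable def tMon (m : (Option X × (Fin r → ℕ)) →₀ ℕ) : (Option X × (Fin r → ℕ)) →₀ ℕ :=
  m.mapDomain fun p => ((none : Option X), p.2)

lemma ordFun_tMon (m : (Option X × (Fin r → ℕ)) →₀ ℕ) : ordFun (tMon m) = ordFun m :=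
  ordFun_mapDomain (fun p => ((none : Option X), p.2)) (fun _ => rfl) m

lemma dehom_monomial_tMon (m : (Option X × (Fin r → ℕ)) →₀ ℕ) :
    dehom K (monomial (tMon m) (1 : K)) = 1 := by
  rw [tMon, ← rename_monomial, dehom, aeval_rename]
  simp [Function.comp_def, bind₁_monomial]

end Dehomogenization

section Star

variable {K : Type*} [CommSemiring K] {X : Type*} {r : ℕ}

/-- `p` is one of the admissible choices of `f*`. -/
def IsStar (f : MvPolynomial (X × (Fin r → ℕ)) K) (p : MvPolynomial (Option X × (Fin r → ℕ)) K) :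
    Prop :=
  ((∃ c : K, f = MvPolynomial.C c) ∧ p = embP K f) ∨
    (∃ σ : Fin r → ℕ, (degS σ : WithBot ℕ) = topord f ∧
      p = MvPolynomial.X ((none : Option X), σ) * embP K f)

variable {f : MvPolynomial (X × (Fin r → ℕ)) K} {p : MvPolynomial (Option X × (Fin r → ℕ)) K}

lemma IsStar.dehom_eq (hp : IsStar f p) : dehom K p = f := by
  rcases hp with ⟨-, rfl⟩ | ⟨σ, -, rfl⟩
  · exact DFunLike.congr_fun dehom_comp_embP f
  · rw [map_mul, dehom_X_none, one_mul]
    exact DFunLike.congr_fun dehom_comp_embP f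

lemma IsStar.ordFun_eq (hp : IsStar f p) {m : (Option X × (Fin r → ℕ)) →₀ ℕ}
    (hm : m ∈ p.support) : ordFun m = topord f := by
  rcases hp with ⟨⟨c, rfl⟩, rfl⟩ | ⟨σ, hσ, rfl⟩
  · rw [embP, rename_C] at hm
    obtain rfl : m = 0 := Finset.mem_singleton.1 (support_monomial_subset hm)
    simp [ordFun, topord_eq_max_vars]
  · have hσ' : ordFun (Finsupp.single ((none : Option X), σ) 1) = topord f := by
      rw [ordFun_single, hσ]
    rw [← hσ']
    exact ordFun_eq_of_mem_support_monomial_mul (by rw [topord_embP, hσ']) hm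

lemma IsStar.isOrdHomog (hp : IsStar f p) : IsOrdHomog p :=
  isOrdHomog_of_forall_ordFun_eq fun _ => hp.ordFun_eq

lemma exists_isStar (f : MvPolynomial (X × (Fin r → ℕ)) K) : ∃ p, IsStar f p := by
  have htop := topord_eq_max_vars f
  cases h : topord f with
  | bot =>
    rw [h, eq_comm, Finset.max_eq_bot, Finset.image_eq_empty, vars_eq_empty_iff_eq_C] at htop
    exact ⟨_, Or.inl ⟨⟨_, htop⟩, rfl⟩⟩
  | coe j =>
    obtain ⟨q, -, hq⟩ := Finset.mem_image.1 (Finset.mem_of_max (h ▸ htop).symm)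
    exact ⟨_, Or.inr ⟨q.2, by rw [h, hq]; rfl, rfl⟩⟩

end Star

section Homogenization

variable {K : Type*} [Field K] {X : Type*} {r : ℕ} (I : Ideal (MvPolynomial (X × (Fin r → ℕ)) K))

def starGens : Set (MvPolynomial (Option X × (Fin r → ℕ)) K) :=
  {p | ∃ f ∈ I, f ≠ 0 ∧ IsStar f p}

lemma span_starGens_le_istar : Ideal.span (starGens I) ≤ Istar I :=
  Ideal.span_mono fun _ ⟨_, hf, _, hp⟩ => ⟨hp.isOrdHomog, hp.dehom_eq ▸ hf⟩

lemma nideal_le_istar : Nideal K X r ≤ Istar I := by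
  refine Ideal.span_mono fun g ⟨hg, hφ⟩ => ⟨hg, ?_⟩
  rw [phiBar_eq_embP_comp_dehom, AlgHom.comp_apply, ← map_zero (embP K)] at hφ
  rw [embP_injective hφ]
  exact I.zero_mem

lemma istar_le_span_starGens_sup_nideal : Istar I ≤ Ideal.span (starGens I) ⊔ Nideal K X r := by
  classical
  rw [Istar, Ideal.span_le]
  rintro g ⟨hg, hgI⟩
  by_cases hf : dehom K g = 0
  · refine Ideal.mem_sup_right (Ideal.subset_span ⟨hg, ?_⟩)
    rw [phiBar_eq_embP_comp_dehom, AlgHom.comp_apply, hf, map_zero]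
  obtain ⟨m₀, hm₀⟩ : g.support.Nonempty := support_nonempty.2 fun h => hf (by rw [h, map_zero])
  obtain ⟨p, hp⟩ := exists_isStar (dehom K g)
  set u := monomial (tMon m₀) (1 : K)
  have htop : topord g ≤ ordFun m₀ := Finset.sup_le fun m hm => (hg m hm m₀ hm₀).le
  have hp_le : topord p ≤ ordFun (tMon m₀) := Finset.sup_le fun m hm =>
    (hp.ordFun_eq hm).trans_le ((topord_dehom_le g).trans (htop.trans (ordFun_tMon m₀).ge))
  have hN : g - u * p ∈ Nideal K X r := by
    refine Ideal.subset_span ⟨isOrdHomog_of_forall_ordFun_eq (d := ordFun m₀) fun m hm => ?_, ?_⟩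
    · rcases Finset.mem_union.1 (support_sub _ _ _ hm) with hm | hm
      · exact hg m hm m₀ hm₀
      · rw [ordFun_eq_of_mem_support_monomial_mul hp_le hm, ordFun_tMon]
    · rw [phiBar_eq_embP_comp_dehom, AlgHom.comp_apply, map_sub, map_mul,
        dehom_monomial_tMon, one_mul, hp.dehom_eq, sub_self, map_zero]
  rw [← add_sub_cancel (u * p) g]
  exact Ideal.add_mem _
    (Ideal.mem_sup_left (Ideal.mul_mem_left _ _ (Ideal.subset_span ⟨_, hgI, hf, hp⟩)))
    (Ideal.mem_sup_right hN)

end Homogenization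

theorem statement_17_general {K : Type*} [Field K] {X : Type*} {r : ℕ}
    (I : Ideal (MvPolynomial (X × (Fin r → ℕ)) K)) :
    Istar I = Ideal.span
      {p | ∃ f ∈ I, f ≠ 0 ∧
        (((∃ c : K, f = MvPolynomial.C c) ∧ p = embP K f) ∨
         (∃ σ : Fin r → ℕ, (degS σ : WithBot ℕ) = topord f ∧
            p = MvPolynomial.X ((none : Option X), σ) * embP K f))}
      + Nideal K X r := by
  change Istar I = Ideal.span (starGens I) + Nideal K X r
  rw [Submodule.add_eq_sup]
  exact le_antisymm (istar_le_span_starGens_sup_nideal I)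
    (sup_le (span_starGens_le_istar I) (nideal_le_istar I))

/-- For a Σ-ideal `I ⊆ P`, its `ord`-homogenization satisfies
`I* = ⟨f* : f ∈ I, f ≠ 0⟩ + N`, where `f* = f` for `f ∈ K` and `f* = t(σ)·f` for any
`σ ∈ Σ` with `deg σ = topord f` otherwise. -/
theorem statement_17 {K : Type*} [Field K] {X : Type*} {r : ℕ}
    (I : Ideal (MvPolynomial (X × (Fin r → ℕ)) K))
    (hIsig : IsSigmaIdeal I) :
    Istar I = Ideal.span
      {p | ∃ f ∈ I, f ≠ 0 ∧
        (((∃ c : K, f = MvPolynomial.C c) ∧ p = embP K f) ∨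
         (∃ σ : Fin r → ℕ, (degS σ : WithBot ℕ) = topord f ∧
            p = MvPolynomial.X ((none : Option X), σ) * embP K f))}
      + Nideal K X r :=
  statement_17_general I
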